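/- arXiv:1604.05426 — 4 statements merged into one kernel-verified Lean document; each statement's English description precedes it below -/
import Mathlib

section
/- (Algebraic core of the converse of Theorem 3.1.) Let (V, g, φ, ξ, η) be a pointwise model of an indefinite almost contact metric structure, and let E, N ∈ V satisfy g(E, E) = 0, g(N, N) = 0 and g(E, N) = 1. Set a = η(N) and b = η(E). If there exists a nonzero real number ω with φE = ω·φN, then b = −ω·a, a ≠ 0, b ≠ 0, 2ab = 1, and ξ = a·E + b·N. -/
/-- Algebraic core of the converse of Theorem 3.1: if `g(E,E) = 0`, `g(N,N) = 0`,
`g(E,N) = 1` and `φE = ω·φN` for some nonzero real `ω`, then with `a = η(N)`,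
`b = η(E)` one has `b = −ω·a`, `a ≠ 0`, `b ≠ 0`, `2ab = 1`, and `ξ = a·E + b·N`. -/
theorem ascreen_of_phiL_eq_phiD2 {V : Type*} [AddCommGroup V] [Module ℝ V]
    (g : V →ₗ[ℝ] V →ₗ[ℝ] ℝ) (φ : V →ₗ[ℝ] V) (ξ : V) (η : V →ₗ[ℝ] ℝ)
    (hg_symm : ∀ X Y : V, g X Y = g Y X)
    (hφφ : ∀ X : V, φ (φ X) = -X + η X • ξ)
    (hηξ : η ξ = 1)
    (hηφ : ∀ X : V, η (φ X) = 0)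
    (hφξ : φ ξ = 0)
    (hmetric : ∀ X Y : V, g (φ X) (φ Y) = g X Y - η X * η Y)
    (E N : V)
    (hEE : g E E = 0) (hNN : g N N = 0) (hEN : g E N = 1)
    (ω : ℝ) (hω : ω ≠ 0) (hphi : φ E = ω • φ N) :
    η E = -(ω * η N) ∧ η N ≠ 0 ∧ η E ≠ 0 ∧
      2 * (η N * η E) = 1 ∧ ξ = η N • E + η E • N := by
  set a := η N with ha
  set b := η E with hb
  -- g ξ ξ = 1
  have gξξ : g ξ ξ = 1 := by
    have h := hmetric ξ ξ
    rw [hφξ, hηξ] at h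
    simp at h
    linarith
  -- key : E - ω • N = (b - ω * a) • ξ
  have key : E - ω • N = (b - ω * a) • ξ := by
    have h1 : φ (φ E) = ω • φ (φ N) := by rw [hphi, map_smul]
    rw [hφφ, hφφ] at h1
    rw [smul_add, smul_neg, smul_smul] at h1
    rw [sub_smul]
    linear_combination (norm := module) -h1
  -- b^2 = ω^2 * a^2
  have hsq : b * b = ω * ω * (a * a) := by
    have h := hmetric E E
    rw [hphi] at h
    simp only [map_smul, LinearMap.smul_apply, smul_eq_mul, hmetric N N, hNN, hEE] at h
    nlinarith [h]
  -- 1 - a*b = -ω*a^2 (from g(φE, φN))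
  have hab : 1 - b * a = -(ω * (a * a)) := by
    have h := hmetric E N
    rw [hphi] at h
    simp only [map_smul, LinearMap.smul_apply, smul_eq_mul, hmetric N N, hNN, hEN] at h
    linarith
  -- rule out b = ω * a
  have hbne : b ≠ ω * a := by
    intro hcontra
    have : E - ω • N = (0 : ℝ) • ξ := by rw [key, hcontra]; simp
    rw [zero_smul, sub_eq_zero] at this
    have hg : g E N = ω * g N N := by rw [this, map_smul, LinearMap.smul_apply, smul_eq_mul]
    rw [hEN, hNN] at hg
    simp at hg
  have hban : b = -(ω * a) := by
    have : (b - ω * a) * (b + ω * a) = 0 := by nlinarith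
    rcases mul_eq_zero.mp this with h | h
    · exact absurd (by linarith) hbne
    · linarith
  -- c = b - ω a = -2ωa, and c^2 = -2ω
  have hc2 : (b - ω * a) * (b - ω * a) = -(2 * ω) := by
    have h := congrArg (fun v => g v v) key
    simp only [map_sub, map_smul, LinearMap.sub_apply, LinearMap.smul_apply,
      smul_eq_mul] at h
    rw [hEE, hNN, gξξ, hg_symm N E, hEN] at h
    nlinarith [h]
  have h2wa : 2 * ω * (a * a) = -1 := by nlinarith
  have hane : a ≠ 0 := by
    intro h0; rw [h0] at h2wa; norm_num at h2wa
  have hbne0 : b ≠ 0 := by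
    rw [hban]; simp [hω, hane]
  have h2ab : 2 * (a * b) = 1 := by rw [hban]; linear_combination -h2wa
  refine ⟨hban, hane, hbne0, h2ab, ?_⟩
  have hc : b - ω * a = -(2 * ω * a) := by rw [hban]; ring
  have : a • (E - ω • N) = ξ := by
    rw [key, hc, smul_smul]
    have : a * -(2 * ω * a) = 1 := by linear_combination -h2wa
    rw [this, one_smul]
  rw [← this, hban]
  module
end

section
/- (Algebraic core of Lemma 3.1: for an ascreen QGCR-lightlike submanifold the structure vector field lies in D₂ ⊕ 𝓛.) Let (V, g, φ, ξ, η) be a pointwise model of an indefinite almost contact metric structure, and let D₁, D₂, L, ν, S be subspaces of V such that φ(D₁) = D₁, φ(ν) = ν, φ(D₂) ⊆ S, φ(L) ⊆ S, and the sum D₁ + ν + S is direct (i.e., each element of D₁ + ν + S has a unique decomposition into components from D₁, ν and S). If ξ = x₁ + x₂ + x₃ + x₄ with x₁ ∈ D₁, x₂ ∈ D₂, x₃ ∈ L, x₄ ∈ ν, then x₁ = 0 and x₄ = 0; in particular ξ ∈ D₂ + L. -/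
/-- Algebraic core of Lemma 3.1: for an ascreen QGCR-lightlike submanifold the
structure vector field lies in `D₂ ⊕ 𝓛`. If `φ(D₁) = D₁`, `φ(ν) = ν`,
`φ(D₂) ⊆ S`, `φ(L) ⊆ S`, the sum `D₁ + ν + S` is direct, and
`ξ = x₁ + x₂ + x₃ + x₄` with `x₁ ∈ D₁`, `x₂ ∈ D₂`, `x₃ ∈ L`, `x₄ ∈ ν`, then
`x₁ = 0`, `x₄ = 0` and `ξ ∈ D₂ + L`. -/
theorem xi_mem_D2_sup_L {V : Type*} [AddCommGroup V] [Module ℝ V]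
    (g : V →ₗ[ℝ] V →ₗ[ℝ] ℝ) (φ : V →ₗ[ℝ] V) (ξ : V) (η : V →ₗ[ℝ] ℝ)
    (hg_symm : ∀ X Y : V, g X Y = g Y X)
    (hφφ : ∀ X : V, φ (φ X) = -X + η X • ξ)
    (hηξ : η ξ = 1)
    (hηφ : ∀ X : V, η (φ X) = 0)
    (hφξ : φ ξ = 0)
    (hmetric : ∀ X Y : V, g (φ X) (φ Y) = g X Y - η X * η Y)
    (D₁ D₂ L ν S : Submodule ℝ V)
    (hD₁ : Submodule.map φ D₁ = D₁)
    (hν : Submodule.map φ ν = ν)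
    (hD₂ : Submodule.map φ D₂ ≤ S)
    (hL : Submodule.map φ L ≤ S)
    (hdirect : ∀ a b c : V, a ∈ D₁ → b ∈ ν → c ∈ S →
      a + b + c = 0 → a = 0 ∧ b = 0 ∧ c = 0)
    (x₁ x₂ x₃ x₄ : V)
    (hx₁ : x₁ ∈ D₁) (hx₂ : x₂ ∈ D₂) (hx₃ : x₃ ∈ L) (hx₄ : x₄ ∈ ν)
    (hξ : ξ = x₁ + x₂ + x₃ + x₄) :
    x₁ = 0 ∧ x₄ = 0 ∧ ξ ∈ D₂ ⊔ L := by
  -- apply φ to ξ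
  have hsum : φ x₁ + (φ x₂ + φ x₃) + φ x₄ = 0 := by
    have := hφξ
    rw [hξ] at this
    simp only [map_add] at this
    rw [← this]; abel
  have hφx₁ : φ x₁ ∈ D₁ := hD₁ ▸ Submodule.mem_map_of_mem hx₁
  have hφx₄ : φ x₄ ∈ ν := hν ▸ Submodule.mem_map_of_mem hx₄
  have hmid : φ x₂ + φ x₃ ∈ S :=
    S.add_mem (hD₂ (Submodule.mem_map_of_mem hx₂)) (hL (Submodule.mem_map_of_mem hx₃))
  have hdir := hdirect (φ x₁) (φ x₄) (φ x₂ + φ x₃) hφx₁ hφx₄ hmid (by rw [← hsum]; abel)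
  -- η vanishes on x₁ and x₄ since φ is surjective on D₁ and ν
  have hηx₁ : η x₁ = 0 := by
    obtain ⟨y, _, hy⟩ := hD₁.ge hx₁
    rw [← hy]; exact hηφ y
  have hηx₄ : η x₄ = 0 := by
    obtain ⟨y, _, hy⟩ := hν.ge hx₄
    rw [← hy]; exact hηφ y
  have h1 : x₁ = 0 := by
    have := hφφ x₁
    rw [hdir.1, map_zero, hηx₁, zero_smul, add_zero] at this
    exact neg_eq_zero.mp this.symm
  have h4 : x₄ = 0 := by
    have := hφφ x₄
    rw [hdir.2.1, map_zero, hηx₄, zero_smul, add_zero] at this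
    exact neg_eq_zero.mp this.symm
  refine ⟨h1, h4, ?_⟩
  rw [hξ, h1, h4, zero_add, add_zero]
  exact Submodule.add_mem _ (Submodule.mem_sup_left hx₂) (Submodule.mem_sup_right hx₃)
end

section
/- (Pointwise form of Theorem 3.1: a 3-lightlike QGCR submanifold is ascreen if and only if φ𝓛 = φD₂.) Let (V, g, φ, ξ, η) be a pointwise model of an indefinite almost contact metric structure. Let E, N ∈ V satisfy g(E, E) = 0, g(N, N) = 0, g(E, N) = 1, and let D₁, ν, S be subspaces of V with φ(D₁) = D₁, φ(ν) = ν, φE ∈ S, φN ∈ S, such that the sum D₁ + ν + S is direct. Then ξ ∈ D₁ + ℝ·E + ℝ·N + ν if and only if ℝ·φE = ℝ·φN. -/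
/-- Pointwise form of Theorem 3.1: a 3-lightlike QGCR submanifold is ascreen if
and only if `φ𝓛 = φD₂`. With `g(E,E) = 0`, `g(N,N) = 0`, `g(E,N) = 1`,
`φ(D₁) = D₁`, `φ(ν) = ν`, `φE ∈ S`, `φN ∈ S` and the sum `D₁ + ν + S` direct,
one has `ξ ∈ D₁ + ℝ·E + ℝ·N + ν` if and only if `ℝ·φE = ℝ·φN`. -/
theorem ascreen_iff_phiL_eq_phiD2 {V : Type*} [AddCommGroup V] [Module ℝ V]
    (g : V →ₗ[ℝ] V →ₗ[ℝ] ℝ) (φ : V →ₗ[ℝ] V) (ξ : V) (η : V →ₗ[ℝ] ℝ)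
    (hg_symm : ∀ X Y : V, g X Y = g Y X)
    (hφφ : ∀ X : V, φ (φ X) = -X + η X • ξ)
    (hηξ : η ξ = 1)
    (hηφ : ∀ X : V, η (φ X) = 0)
    (hφξ : φ ξ = 0)
    (hmetric : ∀ X Y : V, g (φ X) (φ Y) = g X Y - η X * η Y)
    (E N : V)
    (hEE : g E E = 0) (hNN : g N N = 0) (hEN : g E N = 1)
    (D₁ ν S : Submodule ℝ V)
    (hD₁ : Submodule.map φ D₁ = D₁)
    (hν : Submodule.map φ ν = ν)
    (hφE : φ E ∈ S) (hφN : φ N ∈ S)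
    (hdirect : ∀ a b c : V, a ∈ D₁ → b ∈ ν → c ∈ S →
      a + b + c = 0 → a = 0 ∧ b = 0 ∧ c = 0) :
    ξ ∈ D₁ ⊔ Submodule.span ℝ {E} ⊔ Submodule.span ℝ {N} ⊔ ν ↔
      Submodule.span ℝ {φ E} = Submodule.span ℝ {φ N} := by
  -- basic consequences of the structure equations
  have gξ : ∀ X : V, g ξ X = η X := by
    intro X
    have h := hmetric ξ X
    rw [hφξ] at h
    simp only [map_zero, LinearMap.zero_apply, hηξ, one_mul] at h
    linarith
  have gξξ : g ξ ξ = 1 := by rw [gξ, hηξ]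
  have hφE0 : φ E ≠ 0 := by
    intro h0
    have h1 := hφφ E
    rw [h0, map_zero] at h1
    have hE' : E = η E • ξ := neg_add_eq_zero.mp h1.symm
    have hη0 : η E = 0 := by
      have h2 := hEE
      rw [hE'] at h2
      simp only [map_smul, LinearMap.smul_apply, smul_eq_mul, gξξ, mul_one] at h2
      nlinarith
    have hE0 : E = 0 := by rw [hE', hη0, zero_smul]
    rw [hE0] at hEN
    simp at hEN
  have hφN0 : φ N ≠ 0 := by
    intro h0
    have h1 := hφφ N
    rw [h0, map_zero] at h1
    have hN' : N = η N • ξ := neg_add_eq_zero.mp h1.symm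
    have hη0 : η N = 0 := by
      have h2 := hNN
      rw [hN'] at h2
      simp only [map_smul, LinearMap.smul_apply, smul_eq_mul, gξξ, mul_one] at h2
      nlinarith
    have hN0 : N = 0 := by rw [hN', hη0, zero_smul]
    rw [hN0] at hEN
    simp at hEN
  have hξD₁ : ξ ∉ D₁ := by
    intro h
    rw [← hD₁] at h
    obtain ⟨w, _, hw⟩ := h
    have h2 := hηφ w
    rw [hw, hηξ] at h2
    exact one_ne_zero h2
  have hξν : ξ ∉ ν := by
    intro h
    rw [← hν] at h
    obtain ⟨w, _, hw⟩ := h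
    have h2 := hηφ w
    rw [hw, hηξ] at h2
    exact one_ne_zero h2
  constructor
  · intro h
    rw [Submodule.mem_sup] at h
    obtain ⟨x, hx, v, hv, hxv⟩ := h
    rw [Submodule.mem_sup] at hx
    obtain ⟨y, hy, n, hn, hyn⟩ := hx
    rw [Submodule.mem_sup] at hy
    obtain ⟨d, hd, e, he, hde⟩ := hy
    obtain ⟨a, rfl⟩ := Submodule.mem_span_singleton.mp he
    obtain ⟨b, rfl⟩ := Submodule.mem_span_singleton.mp hn
    have hξdec : d + a • E + b • N + v = ξ := by rw [hde, hyn, hxv]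
    have h0 : φ d + a • φ E + b • φ N + φ v = 0 := by
      have := congrArg φ hξdec
      simpa [map_add, map_smul, hφξ] using this
    have hsum : φ d + φ v + (a • φ E + b • φ N) = 0 := by
      rw [← h0]; abel
    obtain ⟨hφd, hφv, hS0⟩ := hdirect (φ d) (φ v) (a • φ E + b • φ N)
      (hD₁ ▸ Submodule.mem_map_of_mem hd) (hν ▸ Submodule.mem_map_of_mem hv)
      (S.add_mem (S.smul_mem a hφE) (S.smul_mem b hφN)) hsum
    -- d and v are multiples of ξ, hence zero
    have hdξ : d = η d • ξ := by
      have h1 := hφφ d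
      rw [hφd, map_zero] at h1
      exact neg_add_eq_zero.mp h1.symm
    have hvξ : v = η v • ξ := by
      have h1 := hφφ v
      rw [hφv, map_zero] at h1
      exact neg_add_eq_zero.mp h1.symm
    have hd0 : d = 0 := by
      by_cases hne : η d = 0
      · rw [hdξ, hne, zero_smul]
      · exfalso
        apply hξD₁
        have hmem : η d • ξ ∈ D₁ := hdξ ▸ hd
        have hξeq : ξ = (η d)⁻¹ • (η d • ξ) := by
          rw [smul_smul, inv_mul_cancel₀ hne, one_smul]
        rw [hξeq]
        exact D₁.smul_mem _ hmem
    have hv0 : v = 0 := by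
      by_cases hne : η v = 0
      · rw [hvξ, hne, zero_smul]
      · exfalso
        apply hξν
        have hmem : η v • ξ ∈ ν := hvξ ▸ hv
        have hξeq : ξ = (η v)⁻¹ • (η v • ξ) := by
          rw [smul_smul, inv_mul_cancel₀ hne, one_smul]
        rw [hξeq]
        exact ν.smul_mem _ hmem
    have hξab : ξ = a • E + b • N := by
      rw [← hξdec, hd0, hv0, zero_add, add_zero]
    -- compute the coefficients
    have hb : b = η E := by
      have h2 : g ξ E = η E := gξ E
      rw [hξab] at h2
      simp only [map_add, map_smul, LinearMap.add_apply, LinearMap.smul_apply,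
        smul_eq_mul, hEE, hg_symm N E, hEN] at h2
      linarith
    have ha : a = η N := by
      have h2 : g ξ N = η N := gξ N
      rw [hξab] at h2
      simp only [map_add, map_smul, LinearMap.add_apply, LinearMap.smul_apply,
        smul_eq_mul, hNN, hEN] at h2
      linarith
    have hone : a * η E + b * η N = 1 := by
      have h2 := hηξ
      rw [hξab] at h2
      simpa [map_add, map_smul, smul_eq_mul] using h2
    have ha0 : a ≠ 0 := by
      intro h
      rw [h, zero_mul, zero_add, hb, ← ha, h, mul_zero] at hone
      exact zero_ne_one hone
    have hb0 : b ≠ 0 := by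
      intro h
      rw [h, zero_mul, add_zero, ha, ← hb, h, mul_zero] at hone
      exact zero_ne_one hone
    have hES : a • φ E = (-b) • φ N := by
      rw [add_eq_zero_iff_eq_neg] at hS0
      rw [hS0, neg_smul]
    have hE' : φ E = (a⁻¹ * (-b)) • φ N := by
      rw [mul_smul, ← hES, smul_smul, inv_mul_cancel₀ ha0, one_smul]
    have hN' : φ N = ((-b)⁻¹ * a) • φ E := by
      have hnb : (-b) ≠ 0 := neg_ne_zero.mpr hb0
      rw [mul_smul, ← hES.symm, smul_smul, inv_mul_cancel₀ hnb, one_smul]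
    apply le_antisymm
    · rw [Submodule.span_singleton_le_iff_mem]
      exact Submodule.mem_span_singleton.mpr ⟨a⁻¹ * (-b), hE'.symm⟩
    · rw [Submodule.span_singleton_le_iff_mem]
      exact Submodule.mem_span_singleton.mpr ⟨(-b)⁻¹ * a, hN'.symm⟩
  · intro hspan
    have h1 : φ E ∈ Submodule.span ℝ {φ N} :=
      hspan ▸ Submodule.mem_span_singleton_self _
    obtain ⟨c, hc⟩ := Submodule.mem_span_singleton.mp h1
    have h2 : φ (c • φ N) = φ (φ E) := by rw [hc]
    rw [map_smul, hφφ, hφφ] at h2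
    -- (η E - c * η N) • ξ = E - c • N
    have key : (η E - c * η N) • ξ = E - c • N := by
      have h4 : c • (-N) + c • (η N • ξ) = -E + η E • ξ := by
        rw [← smul_add]; exact h2
      rw [smul_neg, smul_smul] at h4
      rw [sub_smul]
      have h5 : η E • ξ - (c * η N) • ξ - (E - c • N)
          = (-E + η E • ξ) - (-(c • N) + (c * η N) • ξ) := by abel
      have h6 : η E • ξ - (c * η N) • ξ - (E - c • N) = 0 := by
        rw [h5, ← h4]; abel
      rw [← sub_eq_zero]
      exact h6
    set s := η E - c * η N with hs
    have hs0 : s ≠ 0 := by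
      intro h0
      rw [h0, zero_smul] at key
      have hEcN : E = c • N := by
        have := sub_eq_zero.mp key.symm
        exact this
      rw [hEcN] at hEN
      simp only [map_smul, LinearMap.smul_apply, smul_eq_mul, hNN, mul_zero] at hEN
      exact zero_ne_one hEN
    have hξ : ξ = s⁻¹ • E - (s⁻¹ * c) • N := by
      have h5 : ξ = s⁻¹ • (s • ξ) := by
        rw [smul_smul, inv_mul_cancel₀ hs0, one_smul]
      rw [h5, key, smul_sub, smul_smul]
    have hEmem : E ∈ D₁ ⊔ Submodule.span ℝ {E} ⊔ Submodule.span ℝ {N} ⊔ ν :=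
      Submodule.mem_sup_left (Submodule.mem_sup_left (Submodule.mem_sup_right
        (Submodule.mem_span_singleton_self E)))
    have hNmem : N ∈ D₁ ⊔ Submodule.span ℝ {E} ⊔ Submodule.span ℝ {N} ⊔ ν :=
      Submodule.mem_sup_left (Submodule.mem_sup_right
        (Submodule.mem_span_singleton_self N))
    rw [hξ]
    exact Submodule.sub_mem _ (Submodule.smul_mem _ _ hEmem)
      (Submodule.smul_mem _ _ hNmem)
end

section
/- (Rank constraint (1) on QGCR-lightlike submanifolds: dim(Rad TM) ≥ 3 for a proper QGCR-lightlike submanifold.) Let (V, g, φ, ξ, η) be a pointwise model of an indefinite almost contact metric structure, and let D₁ ⊆ V be a finite-dimensional subspace with φ(D₁) = D₁. Then η vanishes identically on D₁, φ(φx) = −x for every x ∈ D₁, and dim D₁ is even. Consequently, if moreover D₁ ≠ {0} and D₂ is a subspace with D₂ ≠ {0} and D₁ ∩ D₂ = {0}, then dim(D₁ + D₂) ≥ 3. -/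
/-- Rank constraint (1) on QGCR-lightlike submanifolds: for a finite-dimensional
subspace `D₁` with `φ(D₁) = D₁`, the form `η` vanishes on `D₁`, `φ∘φ = −id` on
`D₁`, and `dim D₁` is even; consequently, if `D₁ ≠ {0}` and `D₂ ≠ {0}` with
`D₁ ∩ D₂ = {0}`, then `dim(D₁ + D₂) ≥ 3`. -/
theorem rad_dim_ge_three {V : Type*} [AddCommGroup V] [Module ℝ V]
    (g : V →ₗ[ℝ] V →ₗ[ℝ] ℝ) (φ : V →ₗ[ℝ] V) (ξ : V) (η : V →ₗ[ℝ] ℝ)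
    (hg_symm : ∀ X Y : V, g X Y = g Y X)
    (hφφ : ∀ X : V, φ (φ X) = -X + η X • ξ)
    (hηξ : η ξ = 1)
    (hηφ : ∀ X : V, η (φ X) = 0)
    (hφξ : φ ξ = 0)
    (hmetric : ∀ X Y : V, g (φ X) (φ Y) = g X Y - η X * η Y)
    (D₁ : Submodule ℝ V) [FiniteDimensional ℝ D₁]
    (hD₁ : Submodule.map φ D₁ = D₁) :
    (∀ x ∈ D₁, η x = 0) ∧ (∀ x ∈ D₁, φ (φ x) = -x) ∧
      Even (Module.finrank ℝ D₁) ∧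
      (D₁ ≠ ⊥ → ∀ D₂ : Submodule ℝ V, D₂ ≠ ⊥ → D₁ ⊓ D₂ = ⊥ →
        3 ≤ Module.rank ℝ ↥(D₁ ⊔ D₂)) := by
  -- η vanishes on D₁
  have hη0 : ∀ x ∈ D₁, η x = 0 := by
    intro x hx
    rw [← hD₁] at hx
    obtain ⟨y, hy, rfl⟩ := hx
    exact hηφ y
  -- φ∘φ = -id on D₁
  have hφφ1 : ∀ x ∈ D₁, φ (φ x) = -x := by
    intro x hx
    rw [hφφ, hη0 x hx, zero_smul, add_zero]
  -- φ maps D₁ into D₁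
  have hmap : ∀ x ∈ D₁, φ x ∈ D₁ := by
    intro x hx
    rw [← hD₁]
    exact Submodule.mem_map_of_mem hx
  set J : D₁ →ₗ[ℝ] D₁ := φ.restrict hmap with hJ
  have hJJ : J.comp J = -LinearMap.id := by
    ext x
    have : φ (φ (x : V)) = -(x : V) := hφφ1 x x.2
    simpa [hJ, LinearMap.restrict_apply] using this
  have hdet : LinearMap.det J * LinearMap.det J =
      (-1 : ℝ) ^ Module.finrank ℝ D₁ := by
    rw [← LinearMap.det_comp, hJJ]
    have : (-LinearMap.id : D₁ →ₗ[ℝ] D₁) = (-1 : ℝ) • LinearMap.id := by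
      ext x; simp
    rw [this, LinearMap.det_smul, LinearMap.det_id, mul_one]
  have heven : Even (Module.finrank ℝ D₁) := by
    by_contra hodd
    rw [Nat.not_even_iff_odd] at hodd
    rw [hodd.neg_one_pow] at hdet
    nlinarith [sq_nonneg (LinearMap.det J)]
  refine ⟨hη0, hφφ1, heven, ?_⟩
  intro hne D₂ hne₂ hdisj
  have h1 : 1 ≤ Module.finrank ℝ D₁ := by
    rw [Nat.one_le_iff_ne_zero]
    intro h
    exact hne (Submodule.finrank_eq_zero.mp h)
  have h2 : 2 ≤ Module.finrank ℝ D₁ := by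
    rcases heven with ⟨k, hk⟩
    omega
  have hr1 : (2 : Cardinal) ≤ Module.rank ℝ D₁ := by
    rw [← Module.finrank_eq_rank]
    exact_mod_cast Nat.cast_le.mpr h2
  have hr2 : (1 : Cardinal) ≤ Module.rank ℝ D₂ := by
    haveI : Nontrivial D₂ := Submodule.nontrivial_iff_ne_bot.mpr hne₂
    exact Cardinal.one_le_iff_pos.mpr (rank_pos (R := ℝ) (M := D₂))
  have hsum := Submodule.rank_sup_add_rank_inf_eq D₁ D₂
  rw [hdisj] at hsum
  have : Module.rank ℝ ↥(D₁ ⊔ D₂) = Module.rank ℝ D₁ + Module.rank ℝ D₂ := by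
    simpa using hsum
  rw [this]
  calc (3 : Cardinal) = 2 + 1 := by norm_num
    _ ≤ Module.rank ℝ D₁ + Module.rank ℝ D₂ := add_le_add hr1 hr2
end
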